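/- arXiv:math/0703185 — 7 statements merged into one kernel-verified Lean document; each statement's English description precedes it below -/
import Mathlib

section
/- Let E be a Banach space and F, G closed subspaces with finite deficiency, i.e., the codimension of F + G in E is finite. Then F + G is a closed subspace of E. -/
/-- (Kato) If `F`, `G` are closed subspaces of a Banach space `E` and the codimension of
`F + G` in `E` is finite, then `F + G` is closed. -/
theorem stmt4 {E : Type*} [NormedAddCommGroup E] [NormedSpace ℂ E] [CompleteSpace E]
    (F G : Submodule ℂ E) (hF : IsClosed (F : Set E)) (hG : IsClosed (G : Set E))
    (hfin : FiniteDimensional ℂ (E ⧸ (F ⊔ G))) :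
    IsClosed ((F ⊔ G : Submodule ℂ E) : Set E) := by
  set N : Submodule ℂ E := F ⊔ G with hN
  obtain ⟨M, hM⟩ : ∃ M, IsCompl N M := N.exists_isCompl
  haveI : FiniteDimensional ℂ M := (N.quotientEquivOfIsCompl M hM).finiteDimensional
  haveI : CompleteSpace F := hF.completeSpace_coe
  haveI : CompleteSpace G := hG.completeSpace_coe
  haveI : CompleteSpace M := FiniteDimensional.complete ℂ M
  set S : F × G × M →L[ℂ] E := F.subtypeL.coprod (G.subtypeL.coprod M.subtypeL) with hS
  have hSapp : ∀ p : F × G × M, S p = (p.1 : E) + (p.2.1 : E) + (p.2.2 : E) := by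
    intro p
    simp [hS, add_assoc]
  have hsurj : Function.Surjective S := by
    intro x
    have hx : x ∈ N ⊔ M := by rw [hM.sup_eq_top]; trivial
    obtain ⟨n, hn, m, hm, rfl⟩ := Submodule.mem_sup.mp hx
    rw [hN] at hn
    obtain ⟨f, hf, g, hg, rfl⟩ := Submodule.mem_sup.mp hn
    exact ⟨(⟨f, hf⟩, ⟨g, hg⟩, ⟨m, hm⟩), by rw [hSapp]⟩
  have hopen : IsOpenMap S := S.isOpenMap hsurj
  have hquot : Topology.IsQuotientMap S := hopen.isQuotientMap S.continuous hsurj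
  rw [← hquot.isClosed_preimage]
  have hpre : S ⁻¹' (N : Set E) = (fun p : F × G × M => p.2.2) ⁻¹' {0} := by
    ext p
    simp only [Set.mem_preimage, SetLike.mem_coe, Set.mem_singleton_iff]
    constructor
    · intro h
      have hfg : (p.1 : E) + (p.2.1 : E) ∈ N := by
        exact Submodule.add_mem _ (Submodule.mem_sup_left p.1.2) (Submodule.mem_sup_right p.2.1.2)
      have hmN : (p.2.2 : E) ∈ N := by
        have := Submodule.sub_mem _ h hfg
        rwa [hSapp, add_sub_cancel_left] at this
      have : (p.2.2 : E) ∈ N ⊓ M := ⟨hmN, p.2.2.2⟩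
      rw [hM.inf_eq_bot] at this
      exact Subtype.ext (by simpa using this)
    · intro h
      rw [hSapp, h]
      simpa using Submodule.add_mem _ (Submodule.mem_sup_left p.1.2)
        (Submodule.mem_sup_right p.2.1.2)
  rw [hpre]
  exact isClosed_singleton.preimage (continuous_snd.comp continuous_snd)
end

section
/- Let E₁, E₂ be Banach spaces and T : E₁ → E₂ a bounded linear operator. Set E = E₁ × E₂, F = E₁ × {0}, and G = graph(T). Then F + G is closed in E if and only if im(T) is closed in E₂; moreover ker(T) ≅ F ∩ G and coker(T) ≅ E/(F+G). In particular, if T is semi-Fredholm, then ind T = null(F,G) − def(F,G). -/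
/-- For a bounded operator `T : E₁ → E₂`, with `E = E₁ × E₂`, `F = E₁ × {0}`,
`G = graph T`: `F + G` is closed iff `im T` is closed; `ker T ≅ F ∩ G`;
`coker T ≅ E/(F+G)`; and if everything is finite dimensional the indices agree. -/
theorem stmt5 {E₁ E₂ : Type*}
    [NormedAddCommGroup E₁] [NormedSpace ℂ E₁] [CompleteSpace E₁]
    [NormedAddCommGroup E₂] [NormedSpace ℂ E₂] [CompleteSpace E₂]
    (T : E₁ →L[ℂ] E₂) :
    ∀ (F G : Submodule ℂ (E₁ × E₂)),
      F = (⊤ : Submodule ℂ E₁).prod (⊥ : Submodule ℂ E₂) →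
      G = LinearMap.graph (T : E₁ →ₗ[ℂ] E₂) →
      ((IsClosed ((F ⊔ G : Submodule ℂ (E₁ × E₂)) : Set (E₁ × E₂)) ↔
          IsClosed ((LinearMap.range (T : E₁ →ₗ[ℂ] E₂) : Submodule ℂ E₂) : Set E₂)) ∧
        Nonempty (↥(LinearMap.ker (T : E₁ →ₗ[ℂ] E₂)) ≃ₗ[ℂ] ↥(F ⊓ G)) ∧
        Nonempty ((E₂ ⧸ LinearMap.range (T : E₁ →ₗ[ℂ] E₂)) ≃ₗ[ℂ] ((E₁ × E₂) ⧸ (F ⊔ G))) ∧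
        (∀ (_ : FiniteDimensional ℂ (LinearMap.ker (T : E₁ →ₗ[ℂ] E₂)))
            (_ : FiniteDimensional ℂ (E₂ ⧸ LinearMap.range (T : E₁ →ₗ[ℂ] E₂)))
            (_ : FiniteDimensional ℂ ↥(F ⊓ G))
            (_ : FiniteDimensional ℂ ((E₁ × E₂) ⧸ (F ⊔ G))),
          (Module.finrank ℂ (LinearMap.ker (T : E₁ →ₗ[ℂ] E₂)) : ℤ) -
              Module.finrank ℂ (E₂ ⧸ LinearMap.range (T : E₁ →ₗ[ℂ] E₂)) =
            (Module.finrank ℂ ↥(F ⊓ G) : ℤ) -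
              Module.finrank ℂ ((E₁ × E₂) ⧸ (F ⊔ G)))) := by
  intro F G hF hG
  -- Key fact: F ⊔ G = ⊤ ×ˢ range T
  have hsup : F ⊔ G = (⊤ : Submodule ℂ E₁).prod (LinearMap.range (T : E₁ →ₗ[ℂ] E₂)) := by
    apply le_antisymm
    · apply sup_le
      · rw [hF]
        rintro ⟨x, y⟩ ⟨-, hy⟩
        have hy0 : y = 0 := hy
        exact ⟨trivial, ⟨0, by simp [hy0]⟩⟩
      · rw [hG]
        rintro ⟨x, y⟩ hxy
        rw [LinearMap.mem_graph_iff] at hxy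
        exact ⟨trivial, ⟨x, hxy.symm⟩⟩
    · rintro ⟨x, y⟩ ⟨-, z, hz⟩
      have : (x, y) = ((x - z, 0) : E₁ × E₂) + (z, T z) := by
        simpa [Prod.ext_iff] using hz.symm
      rw [this]
      exact Submodule.add_mem_sup (by rw [hF]; exact ⟨trivial, rfl⟩)
        (by rw [hG, LinearMap.mem_graph_iff]; rfl)
  have hinf : ∀ p : E₁ × E₂, p ∈ F ⊓ G ↔ T p.1 = 0 ∧ p.2 = 0 := by
    rintro ⟨x, y⟩
    rw [Submodule.mem_inf, hF, hG, LinearMap.mem_graph_iff]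
    constructor
    · rintro ⟨⟨-, hy⟩, hxy⟩
      have hy0 : y = 0 := hy
      exact ⟨hxy.symm.trans hy0, hy0⟩
    · rintro ⟨hx, hy⟩
      exact ⟨⟨trivial, hy⟩, hy.trans hx.symm⟩
  refine ⟨?_, ⟨?_⟩, ⟨?_⟩, ?_⟩
  · -- Closedness
    rw [hsup]
    have : ((⊤ : Submodule ℂ E₁).prod (LinearMap.range (T : E₁ →ₗ[ℂ] E₂)) : Set (E₁ × E₂)) =
        Set.univ ×ˢ (LinearMap.range (T : E₁ →ₗ[ℂ] E₂) : Set E₂) := by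
      rfl
    rw [this]
    constructor
    · intro h
      have : (LinearMap.range (T : E₁ →ₗ[ℂ] E₂) : Set E₂) =
          (fun y : E₂ => ((0 : E₁), y)) ⁻¹' (Set.univ ×ˢ (LinearMap.range (T : E₁ →ₗ[ℂ] E₂) : Set E₂)) := by
        ext y; simp
      rw [this]
      exact h.preimage (continuous_const.prodMk continuous_id)
    · exact fun h => isClosed_univ.prod h
  · -- ker T ≃ F ⊓ G
    exact
      { toFun := fun x => ⟨(x.1, 0), (hinf _).mpr ⟨x.2, rfl⟩⟩
        invFun := fun p => ⟨p.1.1, ((hinf _).mp p.2).1⟩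
        map_add' := fun a b => Subtype.ext (Prod.ext rfl (add_zero 0).symm)
        map_smul' := fun c a => Subtype.ext (Prod.ext rfl (smul_zero c).symm)
        left_inv := fun a => rfl
        right_inv := fun p => by
          apply Subtype.ext
          exact Prod.ext rfl (((hinf _).mp p.2).2.symm) }
  · -- coker equiv
    let f : (E₁ × E₂) →ₗ[ℂ] E₂ ⧸ LinearMap.range (T : E₁ →ₗ[ℂ] E₂) :=
      (LinearMap.range (T : E₁ →ₗ[ℂ] E₂)).mkQ.comp (LinearMap.snd ℂ E₁ E₂)
    have hker : LinearMap.ker f = F ⊔ G := by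
      rw [hsup]
      ext ⟨x, y⟩
      simp [f, Submodule.mem_prod]
    have hsurj : Function.Surjective f := by
      intro q
      obtain ⟨y, rfl⟩ := Submodule.mkQ_surjective _ q
      exact ⟨(0, y), rfl⟩
    exact ((LinearMap.quotKerEquivOfSurjective f hsurj).symm.trans
      (Submodule.quotEquivOfEq _ _ hker))
  · -- index equality
    intro h1 h2 h3 h4
    obtain ⟨e1⟩ : Nonempty (↥(LinearMap.ker (T : E₁ →ₗ[ℂ] E₂)) ≃ₗ[ℂ] ↥(F ⊓ G)) := by
      refine ⟨{ toFun := fun x => ⟨(x.1, 0), (hinf _).mpr ⟨x.2, rfl⟩⟩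
                invFun := fun p => ⟨p.1.1, ((hinf _).mp p.2).1⟩
                map_add' := fun a b => Subtype.ext (Prod.ext rfl (add_zero 0).symm)
                map_smul' := fun c a => Subtype.ext (Prod.ext rfl (smul_zero c).symm)
                left_inv := fun a => rfl
                right_inv := fun p => by
                  apply Subtype.ext
                  exact Prod.ext rfl (((hinf _).mp p.2).2.symm) }⟩
    obtain ⟨e2⟩ : Nonempty ((E₂ ⧸ LinearMap.range (T : E₁ →ₗ[ℂ] E₂)) ≃ₗ[ℂ] ((E₁ × E₂) ⧸ (F ⊔ G))) := by
      let f : (E₁ × E₂) →ₗ[ℂ] E₂ ⧸ LinearMap.range (T : E₁ →ₗ[ℂ] E₂) :=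
        (LinearMap.range (T : E₁ →ₗ[ℂ] E₂)).mkQ.comp (LinearMap.snd ℂ E₁ E₂)
      have hker : LinearMap.ker f = F ⊔ G := by
        rw [hsup]
        ext ⟨x, y⟩
        simp [f, Submodule.mem_prod]
      have hsurj : Function.Surjective f := by
        intro q
        obtain ⟨y, rfl⟩ := Submodule.mkQ_surjective _ q
        exact ⟨(0, y), rfl⟩
      exact ⟨(LinearMap.quotKerEquivOfSurjective f hsurj).symm.trans
        (Submodule.quotEquivOfEq _ _ hker)⟩
    rw [e1.finrank_eq, e2.finrank_eq]
end

section
/- Let E₁, E₂ be Banach spaces and T : E₁ → E₂ a bounded linear operator. Then T has finite-dimensional kernel and closed image (is a left-Fredholm operator) if and only if every bounded sequence (xₙ) in E₁ with (Txₙ) convergent in E₂ possesses a convergent subsequence. -/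
open Filter

/-- Hörmander's criterion: a bounded operator `T : E₁ → E₂` between Banach spaces is
left-Fredholm (finite-dimensional kernel and closed image) iff every bounded sequence
`(xₙ)` with `(T xₙ)` convergent has a convergent subsequence. -/
theorem stmt6 {E₁ E₂ : Type*}
    [NormedAddCommGroup E₁] [NormedSpace ℂ E₁] [CompleteSpace E₁]
    [NormedAddCommGroup E₂] [NormedSpace ℂ E₂] [CompleteSpace E₂]
    (T : E₁ →L[ℂ] E₂) :
    (FiniteDimensional ℂ (LinearMap.ker (T : E₁ →ₗ[ℂ] E₂)) ∧
        IsClosed ((LinearMap.range (T : E₁ →ₗ[ℂ] E₂) : Submodule ℂ E₂) : Set E₂)) ↔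
      ∀ (x : ℕ → E₁) (C : ℝ), (∀ n, ‖x n‖ ≤ C) →
        (∃ y, Tendsto (fun n => T (x n)) atTop (nhds y)) →
        ∃ φ : ℕ → ℕ, StrictMono φ ∧ ∃ z, Tendsto (fun n => x (φ n)) atTop (nhds z) := by
  constructor
  · rintro ⟨hfin, hclosed⟩ x C hC ⟨y, hy⟩
    obtain ⟨f, hf⟩ := Submodule.ClosedComplemented.of_finiteDimensional
      (𝕜 := ℂ) (LinearMap.ker (T : E₁ →ₗ[ℂ] E₂))
    set π : E₁ →L[ℂ] E₁ := (LinearMap.ker (T : E₁ →ₗ[ℂ] E₂)).subtypeL.comp f with hπdef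
    have hπmem : ∀ v : E₁, π v ∈ LinearMap.ker (T : E₁ →ₗ[ℂ] E₂) := fun v => (f v).2
    have hTπ : ∀ v : E₁, T (π v) = 0 := fun v => LinearMap.mem_ker.mp (hπmem v)
    have hπker : ∀ v ∈ LinearMap.ker (T : E₁ →ₗ[ℂ] E₂), π v = v := by
      intro v hv
      have := hf ⟨v, hv⟩
      simpa [hπdef] using congrArg Subtype.val this
    have hππ : ∀ v : E₁, π (π v) = π v := fun v => hπker _ (hπmem v)
    have hTsub : ∀ v : E₁, T (v - π v) = T v := by
      intro v; rw [map_sub, hTπ, sub_zero]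
    set M : Submodule ℂ E₁ := LinearMap.ker (π : E₁ →ₗ[ℂ] E₁) with hMdef
    haveI : CompleteSpace M := (ContinuousLinearMap.isClosed_ker π).completeSpace_coe
    haveI : CompleteSpace (LinearMap.range (T : E₁ →ₗ[ℂ] E₂)) := hclosed.completeSpace_coe
    set S : M →L[ℂ] (LinearMap.range (T : E₁ →ₗ[ℂ] E₂)) :=
      (T.comp M.subtypeL).codRestrict (LinearMap.range (T : E₁ →ₗ[ℂ] E₂))
        (fun m => LinearMap.mem_range_self _ _) with hSdef
    have hSker : LinearMap.ker (S : M →ₗ[ℂ] LinearMap.range (T : E₁ →ₗ[ℂ] E₂)) = ⊥ := by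
      rw [LinearMap.ker_eq_bot']
      rintro ⟨m, hm⟩ hSm
      have hTm : T m = 0 := congrArg Subtype.val hSm
      have h1 : π m = m := hπker m (LinearMap.mem_ker.mpr hTm)
      have h2 : π m = 0 := LinearMap.mem_ker.mp hm
      have hm0 : m = 0 := by rw [← h1]; exact h2
      exact Subtype.ext hm0
    have hSrange : LinearMap.range (S : M →ₗ[ℂ] LinearMap.range (T : E₁ →ₗ[ℂ] E₂)) = ⊤ := by
      rw [LinearMap.range_eq_top]
      rintro ⟨yy, v, rfl⟩
      refine ⟨⟨v - π v, LinearMap.mem_ker.mpr (by rw [map_sub, ContinuousLinearMap.coe_coe, hππ, sub_self])⟩, ?_⟩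
      exact Subtype.ext (hTsub v)
    set e := ContinuousLinearEquiv.ofBijective S hSker hSrange with hedef
    have hyr : y ∈ LinearMap.range (T : E₁ →ₗ[ℂ] E₂) :=
      hclosed.mem_of_tendsto hy
        (Eventually.of_forall fun n => LinearMap.mem_range_self _ _)
    set mseq : ℕ → M := fun n =>
      ⟨x n - π (x n), LinearMap.mem_ker.mpr (by rw [map_sub, ContinuousLinearMap.coe_coe, hππ, sub_self])⟩ with hmseq
    have hSm : Tendsto (fun n => S (mseq n)) atTop (nhds ⟨y, hyr⟩) := by
      rw [tendsto_subtype_rng]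
      have : ∀ n, ((S (mseq n) : E₂)) = T (x n) := fun n => hTsub (x n)
      simpa [this] using hy
    have hm : Tendsto (fun n => mseq n) atTop (nhds (e.symm ⟨y, hyr⟩)) := by
      have h2 := (e.symm.continuous.tendsto _).comp hSm
      have h3 : (⇑e.symm ∘ fun n => S (mseq n)) = fun n => mseq n := by
        funext n
        exact ContinuousLinearEquiv.ofBijective_symm_apply_apply S hSker hSrange (mseq n)
      rwa [h3] at h2
    have hmE : Tendsto (fun n => ((mseq n : E₁))) atTop
        (nhds ((e.symm ⟨y, hyr⟩ : M) : E₁)) :=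
      (continuous_subtype_val.tendsto _).comp hm
    set kseq : ℕ → LinearMap.ker (T : E₁ →ₗ[ℂ] E₂) := fun n => f (x n) with hkseq
    have hkb : ∀ n, kseq n ∈ Metric.closedBall (0 : LinearMap.ker (T : E₁ →ₗ[ℂ] E₂)) (‖f‖ * C) := by
      intro n
      rw [Metric.mem_closedBall, dist_zero_right]
      calc ‖kseq n‖ ≤ ‖f‖ * ‖x n‖ := f.le_opNorm (x n)
        _ ≤ ‖f‖ * C := mul_le_mul_of_nonneg_left (hC n) (norm_nonneg f)
    haveI := hfin
    obtain ⟨klim, _, φ, hφ, hkconv⟩ :=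
      (isCompact_closedBall (0 : LinearMap.ker (T : E₁ →ₗ[ℂ] E₂)) (‖f‖ * C)).tendsto_subseq hkb
    refine ⟨φ, hφ, (klim : E₁) + ((e.symm ⟨y, hyr⟩ : M) : E₁), ?_⟩
    have hdecomp : ∀ n, x n = (kseq n : E₁) + ((mseq n : E₁)) := by
      intro n
      show x n = (f (x n) : E₁) + (x n - π (x n))
      simp [hπdef]
    have hkE : Tendsto (fun n => ((kseq (φ n) : E₁))) atTop (nhds (klim : E₁)) :=
      (continuous_subtype_val.tendsto _).comp hkconv
    have hmE' : Tendsto (fun n => ((mseq (φ n) : E₁))) atTop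
        (nhds ((e.symm ⟨y, hyr⟩ : M) : E₁)) := hmE.comp hφ.tendsto_atTop
    have := hkE.add hmE'
    simpa [← hdecomp] using this
  · intro H
    constructor
    · -- finite-dimensional kernel
      apply FiniteDimensional.of_isCompact_closedBall₀ (𝕜 := ℂ) one_pos
      apply IsSeqCompact.isCompact
      intro u hu
      have hub : ∀ n, ‖(u n : E₁)‖ ≤ 1 := by
        intro n
        have := hu n
        rw [Metric.mem_closedBall, dist_zero_right] at this
        exact this
      have hT0 : ∀ n, T ((u n : E₁)) = 0 := fun n => LinearMap.mem_ker.mp (u n).2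
      obtain ⟨φ, hφ, z, hz⟩ := H (fun n => (u n : E₁)) 1 hub ⟨0, by simp [hT0]⟩
      have hzker : z ∈ LinearMap.ker (T : E₁ →ₗ[ℂ] E₂) :=
        (ContinuousLinearMap.isClosed_ker T).mem_of_tendsto hz
          (Eventually.of_forall fun n => (u (φ n)).2)
      have hznorm : ‖z‖ ≤ 1 :=
        le_of_tendsto hz.norm (Eventually.of_forall fun n => hub (φ n))
      refine ⟨⟨z, hzker⟩, ?_, φ, hφ, ?_⟩
      · rw [Metric.mem_closedBall, dist_zero_right]; exact hznorm
      · rw [tendsto_subtype_rng]; exact hz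
    · -- closed range
      have key : ∃ c : ℝ, 0 ≤ c ∧
          ∀ v : E₁, Metric.infDist v (LinearMap.ker (T : E₁ →ₗ[ℂ] E₂)) ≤ c * ‖T v‖ := by
        by_contra hcon
        push_neg at hcon
        choose v hv using fun n : ℕ => hcon ((n : ℝ) + 1) (by positivity)
        set d : ℕ → ℝ := fun n => Metric.infDist (v n) (LinearMap.ker (T : E₁ →ₗ[ℂ] E₂)) with hd
        have hd0 : ∀ n, 0 < d n := fun n =>
          lt_of_le_of_lt (by positivity) (hv n)
        have hker0 : ((0 : E₁)) ∈ ((LinearMap.ker (T : E₁ →ₗ[ℂ] E₂) : Submodule ℂ E₁) : Set E₁) :=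
          Submodule.zero_mem _
        have hvn : ∀ n, ∃ u ∈ ((LinearMap.ker (T : E₁ →ₗ[ℂ] E₂) : Submodule ℂ E₁) : Set E₁),
            dist (v n) u < 2 * d n := by
          intro n
          refine (Metric.infDist_lt_iff ⟨0, hker0⟩).mp ?_
          have := hd0 n; linarith [two_mul (d n)]
        choose u hu hdist using hvn
        set w : ℕ → E₁ := fun n => (d n)⁻¹ • (v n - u n) with hw
        have hwnorm : ∀ n, ‖w n‖ ≤ 2 := by
          intro n
          rw [hw, norm_smul, norm_inv, Real.norm_eq_abs, abs_of_pos (hd0 n),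
            inv_mul_le_iff₀ (hd0 n)]
          rw [← dist_eq_norm]
          linarith [hdist n]
        have hTv : ∀ n : ℕ, ((n : ℝ) + 1) * ‖T (v n)‖ ≤ d n := fun n => (hv n).le
        have hTwle : ∀ n, ‖T (w n)‖ ≤ 1 / ((n : ℝ) + 1) := by
          intro n
          have hn1 : (0 : ℝ) < (n : ℝ) + 1 := by positivity
          rw [hw, T.map_smul_of_tower, norm_smul, norm_inv, Real.norm_eq_abs,
            abs_of_pos (hd0 n), map_sub,
            (by simpa using LinearMap.mem_ker.mp (hu n) : T (u n) = 0), sub_zero]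
          have h2 : ‖T (v n)‖ ≤ d n / ((n : ℝ) + 1) := by
            rw [le_div_iff₀ hn1, mul_comm]; exact hTv n
          calc (d n)⁻¹ * ‖T (v n)‖
              ≤ (d n)⁻¹ * (d n / ((n : ℝ) + 1)) :=
                mul_le_mul_of_nonneg_left h2 (inv_nonneg.mpr (hd0 n).le)
            _ = 1 / ((n : ℝ) + 1) := by
                rw [div_eq_mul_inv, ← mul_assoc, inv_mul_cancel₀ (hd0 n).ne',
                  one_mul, one_div]
        have hTw : Tendsto (fun n => T (w n)) atTop (nhds 0) := by
          rw [tendsto_zero_iff_norm_tendsto_zero]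
          exact squeeze_zero (fun n => norm_nonneg _) hTwle
            tendsto_one_div_add_atTop_nhds_zero_nat
        obtain ⟨φ, hφ, z, hz⟩ := H w 2 hwnorm ⟨0, hTw⟩
        have hzT : T z = 0 := by
          have h1 : Tendsto (fun n => T (w (φ n))) atTop (nhds (T z)) :=
            (T.continuous.tendsto z).comp hz
          exact tendsto_nhds_unique h1 (hTw.comp hφ.tendsto_atTop)
        have hlow : ∀ n, 1 ≤ ‖w n - z‖ := by
          intro n
          have hmem : u n + d n • z ∈ LinearMap.ker (T : E₁ →ₗ[ℂ] E₂) :=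
            Submodule.add_mem _ (hu n)
              (Submodule.smul_of_tower_mem _ _ (LinearMap.mem_ker.mpr hzT))
          have h1 : d n ≤ ‖v n - (u n + d n • z)‖ := by
            rw [← dist_eq_norm]
            exact Metric.infDist_le_dist_of_mem hmem
          have heq : w n - z = (d n)⁻¹ • (v n - (u n + d n • z)) := by
            simp only [hw, smul_sub, smul_add, smul_smul]
            rw [inv_mul_cancel₀ (hd0 n).ne', one_smul]
            abel
          rw [heq, norm_smul, norm_inv, Real.norm_eq_abs, abs_of_pos (hd0 n)]
          have h2 := mul_le_mul_of_nonneg_left h1 (inv_nonneg.mpr (hd0 n).le)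
          rwa [inv_mul_cancel₀ (hd0 n).ne'] at h2
        have h3 : Tendsto (fun n => ‖w (φ n) - z‖) atTop (nhds 0) := by
          have := (hz.sub (tendsto_const_nhds (x := z))).norm
          simpa using this
        have h4 : ∀ᶠ n in atTop, ‖w (φ n) - z‖ < 1 :=
          h3.eventually (gt_mem_nhds one_pos)
        obtain ⟨n, hn⟩ := h4.exists
        exact absurd (hlow (φ n)) (not_le.mpr hn)
      obtain ⟨c, hc0, hc⟩ := key
      apply IsSeqClosed.isClosed
      intro g y hg hgy
      choose x hx using hg
      have hBdd : BddAbove (Set.range fun n => ‖g n‖) := hgy.norm.bddAbove_range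
      obtain ⟨B, hB⟩ := hBdd
      have hBn : ∀ n, ‖g n‖ ≤ B := fun n => hB ⟨n, rfl⟩
      have hker0 : ((0 : E₁)) ∈ ((LinearMap.ker (T : E₁ →ₗ[ℂ] E₂) : Submodule ℂ E₁) : Set E₁) :=
        Submodule.zero_mem _
      have hvn : ∀ n, ∃ u ∈ ((LinearMap.ker (T : E₁ →ₗ[ℂ] E₂) : Submodule ℂ E₁) : Set E₁),
          dist (x n) u < Metric.infDist (x n) (LinearMap.ker (T : E₁ →ₗ[ℂ] E₂)) + 1 := by
        intro n
        refine (Metric.infDist_lt_iff ⟨0, hker0⟩).mp ?_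
        linarith
      choose u hu hdist using hvn
      set zseq : ℕ → E₁ := fun n => x n - u n with hzseq
      have hTz : ∀ n, T (zseq n) = g n := by
        intro n
        rw [hzseq, map_sub, (by simpa using LinearMap.mem_ker.mp (hu n) : T (u n) = 0), sub_zero]; exact hx n
      have hznorm : ∀ n, ‖zseq n‖ ≤ c * B + 1 := by
        intro n
        have h1 : ‖zseq n‖ = dist (x n) (u n) := by rw [dist_eq_norm]
        have h2 := hdist n
        have h3 := hc (x n)
        rw [show T (x n) = g n from hx n] at h3
        have h4 : c * ‖g n‖ ≤ c * B := mul_le_mul_of_nonneg_left (hBn n) hc0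
        linarith
      obtain ⟨φ, hφ, z, hz⟩ := H zseq (c * B + 1) hznorm ⟨y, by simpa [hTz] using hgy⟩
      have hTzy : T z = y := by
        have h1 : Tendsto (fun n => T (zseq (φ n))) atTop (nhds (T z)) :=
          (T.continuous.tendsto z).comp hz
        have h2 : Tendsto (fun n => T (zseq (φ n))) atTop (nhds y) := by
          simpa [hTz, Function.comp_def] using hgy.comp hφ.tendsto_atTop
        exact tendsto_nhds_unique h1 h2
      exact ⟨z, hTzy⟩
end

section
/- Let E be a Banach space, B a closed subspace, and P a continuous projection in E. Then (I−P)(B) is closed in E if and only if B + im P is closed in E. -/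
/-- If `B` is a closed subspace and `P` a continuous projection in a Banach space `E`,
then `(I−P)(B)` is closed iff `B + im P` is closed. -/
theorem stmt8 {E : Type*} [NormedAddCommGroup E] [NormedSpace ℂ E]
    (B : Submodule ℂ E) (hB : IsClosed (B : Set E))
    (P : E →L[ℂ] E) (hP : ∀ x, P (P x) = P x) :
    IsClosed ((Submodule.map ((1 - P : E →L[ℂ] E) : E →ₗ[ℂ] E) B : Submodule ℂ E) : Set E) ↔
      IsClosed ((B ⊔ LinearMap.range (P : E →ₗ[ℂ] E) : Submodule ℂ E) : Set E) := by
  set Q : E →L[ℂ] E := 1 - P with hQdef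
  have hQ : ∀ x, Q x = x - P x := fun x => rfl
  have hMker : ∀ x ∈ Submodule.map (Q : E →ₗ[ℂ] E) B, P x = 0 := by
    rintro _ ⟨b, hb, rfl⟩
    simp [hQ, map_sub, hP]
  have hkey : ∀ x, Q x ∈ Submodule.map (Q : E →ₗ[ℂ] E) B ↔ x ∈ B ⊔ LinearMap.range (P : E →ₗ[ℂ] E) := by
    intro x
    constructor
    · intro h
      have hx : x = Q x + P x := by rw [hQ]; abel
      rw [hx]
      refine Submodule.add_mem _ ?_ (Submodule.mem_sup_right ⟨x, rfl⟩)
      obtain ⟨b, hb, hbx⟩ := h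
      rw [← hbx, ContinuousLinearMap.coe_coe, hQ]
      exact Submodule.sub_mem _ (Submodule.mem_sup_left hb)
        (Submodule.mem_sup_right ⟨b, rfl⟩)
    · intro h
      obtain ⟨b, hb, y, hy, rfl⟩ := Submodule.mem_sup.mp h
      obtain ⟨z, rfl⟩ := hy
      have : Q (b + P z) = Q b := by
        simp [hQ, map_add, hP]
      simp only [ContinuousLinearMap.coe_coe]
      rw [this]
      exact ⟨b, hb, rfl⟩
  constructor
  · intro h
    have hset : ((B ⊔ LinearMap.range (P : E →ₗ[ℂ] E) : Submodule ℂ E) : Set E)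
        = Q ⁻¹' ((Submodule.map (Q : E →ₗ[ℂ] E) B : Submodule ℂ E) : Set E) := by
      ext x
      simp only [Set.mem_preimage, SetLike.mem_coe]
      exact (hkey x).symm
    rw [hset]
    exact h.preimage Q.continuous
  · intro h
    have hset : ((Submodule.map (Q : E →ₗ[ℂ] E) B : Submodule ℂ E) : Set E)
        = ((B ⊔ LinearMap.range (P : E →ₗ[ℂ] E) : Submodule ℂ E) : Set E) ∩ {x | P x = 0} := by
      ext x
      simp only [Set.mem_inter_iff, SetLike.mem_coe, Set.mem_setOf_eq]
      constructor
      · intro hx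
        have hPx := hMker x hx
        have hQx : Q x = x := by rw [hQ, hPx, sub_zero]
        exact ⟨(hkey x).mp (by rw [hQx]; exact hx), hPx⟩
      · rintro ⟨hxN, hPx⟩
        have hQx : Q x = x := by rw [hQ, hPx, sub_zero]
        rw [← hQx]
        exact (hkey x).mpr hxN
    rw [hset]
    exact h.inter (isClosed_eq P.continuous continuous_const)
end

section
/- Let E be a Banach space, B a closed subspace, and P a continuous projection in E. Then the codimension of (I−P)(B) in ker P equals the codimension of B + im P in E. Consequently, the restriction (I−P) : B → ker P is a left-Fredholm operator if and only if (B, im P) is a left-Fredholm pair, and in that case ind((I−P):B→ker P) = ind(B, im P). -/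
/-- For a closed subspace `B` and a continuous projection `P` in a Banach space `E`:
the codimension of `(I−P)(B)` in `ker P` equals the codimension of `B + im P` in `E`;
`(I−P) : B → ker P` is left-Fredholm iff `(B, im P)` is a left-Fredholm pair; and in the
finite dimensional situation the indices agree. -/
theorem stmt9 {E : Type*} [NormedAddCommGroup E] [NormedSpace ℂ E] [CompleteSpace E]
    (B : Submodule ℂ E) (hB : IsClosed (B : Set E))
    (P : E →L[ℂ] E) (hP : ∀ x, P (P x) = P x) :
    Nonempty ((↥(LinearMap.ker (P : E →ₗ[ℂ] E)) ⧸
          Submodule.comap (LinearMap.ker (P : E →ₗ[ℂ] E)).subtype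
            (Submodule.map ((1 - P : E →L[ℂ] E) : E →ₗ[ℂ] E) B)) ≃ₗ[ℂ]
        (E ⧸ (B ⊔ LinearMap.range (P : E →ₗ[ℂ] E)))) ∧
      ((FiniteDimensional ℂ
            (LinearMap.ker (((1 - P : E →L[ℂ] E) : E →ₗ[ℂ] E) ∘ₗ B.subtype)) ∧
          IsClosed ((Submodule.map ((1 - P : E →L[ℂ] E) : E →ₗ[ℂ] E) B : Submodule ℂ E) : Set E)) ↔
        (IsClosed ((B ⊔ LinearMap.range (P : E →ₗ[ℂ] E) : Submodule ℂ E) : Set E) ∧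
          FiniteDimensional ℂ ↥(B ⊓ LinearMap.range (P : E →ₗ[ℂ] E)))) ∧
      (∀ (_ : FiniteDimensional ℂ
            (LinearMap.ker (((1 - P : E →L[ℂ] E) : E →ₗ[ℂ] E) ∘ₗ B.subtype)))
          (_ : FiniteDimensional ℂ (↥(LinearMap.ker (P : E →ₗ[ℂ] E)) ⧸
            Submodule.comap (LinearMap.ker (P : E →ₗ[ℂ] E)).subtype
              (Submodule.map ((1 - P : E →L[ℂ] E) : E →ₗ[ℂ] E) B)))
          (_ : FiniteDimensional ℂ ↥(B ⊓ LinearMap.range (P : E →ₗ[ℂ] E)))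
          (_ : FiniteDimensional ℂ (E ⧸ (B ⊔ LinearMap.range (P : E →ₗ[ℂ] E)))),
        (Module.finrank ℂ
              (LinearMap.ker (((1 - P : E →L[ℂ] E) : E →ₗ[ℂ] E) ∘ₗ B.subtype)) : ℤ) -
            Module.finrank ℂ (↥(LinearMap.ker (P : E →ₗ[ℂ] E)) ⧸
              Submodule.comap (LinearMap.ker (P : E →ₗ[ℂ] E)).subtype
                (Submodule.map ((1 - P : E →L[ℂ] E) : E →ₗ[ℂ] E) B)) =
          (Module.finrank ℂ ↥(B ⊓ LinearMap.range (P : E →ₗ[ℂ] E)) : ℤ) -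
            Module.finrank ℂ (E ⧸ (B ⊔ LinearMap.range (P : E →ₗ[ℂ] E)))) := by
  set Qc : E →L[ℂ] E := 1 - P with hQc
  have hQapp : ∀ x : E, Qc x = x - P x := fun x => by simp [hQc]
  have hQP : ∀ x : E, P (Qc x) = 0 := fun x => by
    rw [hQapp, map_sub, hP, sub_self]
  have hmemrange : ∀ x : E, x ∈ LinearMap.range (P : E →ₗ[ℂ] E) ↔ P x = x := by
    intro x
    constructor
    · rintro ⟨y, rfl⟩; exact hP y
    · intro h; exact ⟨x, h⟩
  have hsup_iff : ∀ x : E, x ∈ B ⊔ LinearMap.range (P : E →ₗ[ℂ] E) ↔ Qc x ∈ Submodule.map (Qc : E →ₗ[ℂ] E) B := by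
    intro x
    constructor
    · intro hx
      obtain ⟨b, hb, p, hp, rfl⟩ := Submodule.mem_sup.1 hx
      refine ⟨b, hb, ?_⟩
      have hp0 : Qc p = 0 := by rw [hQapp, (hmemrange p).1 hp, sub_self]
      rw [map_add, hp0, add_zero]; rfl
    · rintro ⟨b, hb, hbx⟩
      have hQx : Qc x + P x = x := by rw [hQapp]; abel
      have hx : b + (P x - P b) = x := by
        calc b + (P x - P b) = (b - P b) + P x := by abel
          _ = Qc b + P x := by rw [hQapp]
          _ = Qc x + P x := by exact congrArg (· + P x) hbx
          _ = x := hQx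
      exact Submodule.mem_sup.2 ⟨b, hb, P x - P b,
        sub_mem ⟨x, rfl⟩ ⟨b, rfl⟩, hx⟩
  have hker_iff : ∀ x : E, P x = 0 →
      (x ∈ Submodule.map (Qc : E →ₗ[ℂ] E) B ↔ x ∈ B ⊔ LinearMap.range (P : E →ₗ[ℂ] E)) := by
    intro x hx0
    have hfix : Qc x = x := by rw [hQapp, hx0, sub_zero]
    constructor
    · rintro ⟨b, hb, rfl⟩
      exact Submodule.mem_sup.2 ⟨b, hb, -(P b), neg_mem ⟨b, rfl⟩, by rw [ContinuousLinearMap.coe_coe, hQapp]; abel⟩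
    · intro h
      have := (hsup_iff x).1 h
      rwa [hfix] at this
  have hcomap : Submodule.comap (LinearMap.ker (P : E →ₗ[ℂ] E)).subtype (Submodule.map (Qc : E →ₗ[ℂ] E) B)
      = Submodule.comap (LinearMap.ker (P : E →ₗ[ℂ] E)).subtype (B ⊔ LinearMap.range (P : E →ₗ[ℂ] E)) := by
    ext x
    simp only [Submodule.mem_comap]
    exact hker_iff _ (LinearMap.mem_ker.1 x.2)
  -- the first equivalence
  have hsurj : Function.Surjective
      ((B ⊔ LinearMap.range (P : E →ₗ[ℂ] E)).mkQ ∘ₗ (LinearMap.ker (P : E →ₗ[ℂ] E)).subtype) := by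
    intro y
    obtain ⟨x, rfl⟩ := Submodule.mkQ_surjective _ y
    refine ⟨⟨Qc x, LinearMap.mem_ker.2 (hQP x)⟩, ?_⟩
    show Submodule.Quotient.mk (Qc x) = Submodule.Quotient.mk x
    rw [Submodule.Quotient.eq]
    have h1 : Qc x - x = -(P x) := by rw [hQapp]; abel
    rw [h1]
    exact neg_mem (Submodule.mem_sup_right ⟨x, rfl⟩)
  have e1 : (↥(LinearMap.ker (P : E →ₗ[ℂ] E)) ⧸
        Submodule.comap (LinearMap.ker (P : E →ₗ[ℂ] E)).subtype (Submodule.map (Qc : E →ₗ[ℂ] E) B)) ≃ₗ[ℂ]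
      (E ⧸ (B ⊔ LinearMap.range (P : E →ₗ[ℂ] E))) := by
    refine (Submodule.quotEquivOfEq _ _ ?_).trans
      (LinearMap.quotKerEquivOfSurjective _ hsurj)
    rw [LinearMap.ker_comp, Submodule.ker_mkQ]
    exact hcomap
  -- the second equivalence
  have hker2 : LinearMap.ker ((Qc : E →ₗ[ℂ] E) ∘ₗ B.subtype)
      = Submodule.comap B.subtype (B ⊓ LinearMap.range (P : E →ₗ[ℂ] E)) := by
    ext x
    simp only [LinearMap.mem_ker, LinearMap.comp_apply, Submodule.mem_comap,
      Submodule.coe_subtype, Submodule.mem_inf, ContinuousLinearMap.coe_coe]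
    constructor
    · intro h
      rw [hQapp] at h
      refine ⟨x.2, (hmemrange _).2 ?_⟩
      have : P (x : E) = (x : E) := by
        have := sub_eq_zero.1 h
        exact this.symm
      exact this
    · rintro ⟨-, hx⟩
      rw [hQapp, (hmemrange _).1 hx, sub_self]
  have e2 : ↥(LinearMap.ker ((Qc : E →ₗ[ℂ] E) ∘ₗ B.subtype)) ≃ₗ[ℂ]
      ↥(B ⊓ LinearMap.range (P : E →ₗ[ℂ] E)) :=
    (LinearEquiv.ofEq _ _ hker2).trans (Submodule.comapSubtypeEquivOfLe inf_le_left)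
  -- set equalities for closedness
  have hsetA : ((Submodule.map (Qc : E →ₗ[ℂ] E) B : Submodule ℂ E) : Set E)
      = (LinearMap.ker (P : E →ₗ[ℂ] E) : Set E) ∩ ((B ⊔ LinearMap.range (P : E →ₗ[ℂ] E) : Submodule ℂ E) : Set E) := by
    ext x
    simp only [Set.mem_inter_iff, SetLike.mem_coe]
    constructor
    · rintro ⟨b, hb, rfl⟩
      exact ⟨LinearMap.mem_ker.2 (hQP b), (hker_iff _ (hQP b)).1 ⟨b, hb, rfl⟩⟩
    · rintro ⟨h1, h2⟩
      exact (hker_iff x (LinearMap.mem_ker.1 h1)).2 h2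
  have hsetB : ((B ⊔ LinearMap.range (P : E →ₗ[ℂ] E) : Submodule ℂ E) : Set E)
      = Qc ⁻¹' ((Submodule.map (Qc : E →ₗ[ℂ] E) B : Submodule ℂ E) : Set E) := by
    ext x
    simpa using hsup_iff x
  refine ⟨⟨e1⟩, ⟨?_, ?_⟩, ?_⟩
  · rintro ⟨hfd, hcl⟩
    refine ⟨?_, ?_⟩
    · rw [show ((B ⊔ LinearMap.range (P : E →ₗ[ℂ] E) : Submodule ℂ E) : Set E)
          = Qc ⁻¹' ((Submodule.map (Qc : E →ₗ[ℂ] E) B : Submodule ℂ E) : Set E) from hsetB]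
      exact hcl.preimage Qc.continuous
    · exact e2.finiteDimensional
  · rintro ⟨hcl, hfd⟩
    refine ⟨e2.symm.finiteDimensional, ?_⟩
    rw [show ((Submodule.map (Qc : E →ₗ[ℂ] E) B : Submodule ℂ E) : Set E)
        = (LinearMap.ker (P : E →ₗ[ℂ] E) : Set E) ∩ ((B ⊔ LinearMap.range (P : E →ₗ[ℂ] E) : Submodule ℂ E) : Set E)
        from hsetA]
    exact (ContinuousLinearMap.isClosed_ker P).inter hcl
  · intro _ _ _ _
    rw [LinearEquiv.finrank_eq e2, LinearEquiv.finrank_eq e1]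
end

section
/- Let E be a Banach space and P, Q continuous projections in E such that P − Q is a compact operator. Then (im P, ker Q) is a Fredholm pair, i.e., im P + ker Q is closed, dim(im P ∩ ker Q) < ∞, and codim(im P + ker Q) < ∞. -/
open Metric Set Filter Topology

section FredholmAux

variable {E : Type*} [NormedAddCommGroup E] [NormedSpace ℂ E]

/-- A closed submodule on which a compact operator acts as the identity is finite-dimensional. -/
lemma auxFD10 {C : E →L[ℂ] E} (hC : IsCompactOperator ⇑C) (F : Submodule ℂ E)
    (hFc : IsClosed (F : Set E)) (hid : ∀ x ∈ F, C x = x) : FiniteDimensional ℂ F := by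
  obtain ⟨K, hK, hKsub⟩ :=
    IsCompactOperator.image_closedBall_subset_compact (f := (C : E →ₗ[ℂ] E)) hC 1
  have hsub : (F : Set E) ∩ closedBall 0 1 ⊆ K := by
    rintro x ⟨hxF, hx1⟩
    exact hKsub ⟨x, hx1, hid x hxF⟩
  have hcomp : IsCompact ((F : Set E) ∩ closedBall 0 1) :=
    hK.of_isClosed_subset (hFc.inter isClosed_closedBall) hsub
  have hball : IsCompact (closedBall (0 : F) 1) := by
    rw [Topology.IsEmbedding.subtypeVal.isCompact_iff]
    convert hcomp using 1
    ext x
    simp only [Set.mem_image, Metric.mem_closedBall, Set.mem_inter_iff, SetLike.mem_coe,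
      dist_zero_right]
    constructor
    · rintro ⟨y, hy, rfl⟩
      exact ⟨y.2, hy⟩
    · rintro ⟨hxF, hx⟩
      exact ⟨⟨x, hxF⟩, hx, rfl⟩
  exact FiniteDimensional.of_isCompact_closedBall₀ ℂ one_pos hball

lemma auxClosedSup10 {M N : Submodule ℂ E} (hM : IsClosed (M : Set E)) (hMN : M ≤ N)
    (hfd : FiniteDimensional ℂ (N.map M.mkQ)) : IsClosed (N : Set E) := by
  haveI : IsClosed (M : Set E) := hM
  haveI := hfd
  have h1 : IsClosed ((N.map M.mkQ : Submodule ℂ (E ⧸ M)) : Set (E ⧸ M)) :=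
    Submodule.closed_of_finiteDimensional _
  have h2 : (N : Set E) = M.mkQ ⁻¹' (N.map M.mkQ : Submodule ℂ (E ⧸ M)) := by
    ext x
    simp only [Set.mem_preimage, SetLike.mem_coe, Submodule.mem_map]
    constructor
    · exact fun hx => ⟨x, hx, rfl⟩
    · rintro ⟨y, hy, hxy⟩
      have hxyM : x - y ∈ M := by
        have := (Submodule.Quotient.eq M).mp hxy.symm
        simpa using this
      simpa using N.add_mem (hMN hxyM) hy
  rw [h2]
  exact h1.preimage M.isOpenQuotientMap_mkQ.continuous

lemma auxRangeClosed10 [CompleteSpace E] {C : E →L[ℂ] E} (hC : IsCompactOperator ⇑C)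
    (T : E →L[ℂ] E) (hT : ∀ x, T x = x + C x) :
    IsClosed ((LinearMap.range (T : E →ₗ[ℂ] E) : Submodule ℂ E) : Set E) := by
  set N := LinearMap.ker (T : E →ₗ[ℂ] E) with hN
  have hNc : IsClosed (N : Set E) := ContinuousLinearMap.isClosed_ker T
  have hCneg : IsCompactOperator ⇑(-C) := by
    have := hC.neg
    simpa using this
  haveI hNfd : FiniteDimensional ℂ N := by
    apply auxFD10 hCneg N hNc
    intro x hx
    have hx0 : T x = 0 := hx
    rw [hT] at hx0
    simp only [ContinuousLinearMap.neg_apply]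
    linear_combination (norm := abel) -hx0
  obtain ⟨M, hMc, hcompl⟩ :=
    (Submodule.ClosedComplemented.of_finiteDimensional N).exists_isClosed_isCompl
  -- T is bounded below on M
  have hbb : ∃ c : ℝ, 0 < c ∧ ∀ x ∈ M, c * ‖x‖ ≤ ‖T x‖ := by
    by_contra hcon
    push_neg at hcon
    have key : ∀ n : ℕ, ∃ u : E, u ∈ M ∧ ‖u‖ = 1 ∧ ‖T u‖ < 1 / (n + 1) := by
      intro n
      obtain ⟨x, hxM, hx⟩ := hcon (1 / (n + 1)) (by positivity)
      have hx0 : x ≠ 0 := by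
        rintro rfl
        simp at hx
      have hnx : ‖x‖ ≠ 0 := norm_ne_zero_iff.2 hx0
      refine ⟨(‖x‖⁻¹ : ℂ) • x, M.smul_mem _ hxM, ?_, ?_⟩
      · simp [norm_smul, inv_mul_cancel₀ hnx]
      · rw [map_smul, norm_smul]
        have : ‖(‖x‖⁻¹ : ℂ)‖ = ‖x‖⁻¹ := by
          simp [Complex.norm_real]
        rw [this]
        calc ‖x‖⁻¹ * ‖T x‖ < ‖x‖⁻¹ * (1 / (n + 1) * ‖x‖) := by
              apply mul_lt_mul_of_pos_left hx (by positivity)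
          _ = 1 / (n + 1) := by field_simp
    choose u huM hunorm huT using key
    obtain ⟨K, hK, hKsub⟩ :=
      IsCompactOperator.image_closedBall_subset_compact (f := (C : E →ₗ[ℂ] E)) hC 1
    have hCu : ∀ n, C (u n) ∈ K := fun n => hKsub ⟨u n, by simp [hunorm n], rfl⟩
    obtain ⟨y, -, φ, hφ, hyl⟩ := hK.tendsto_subseq hCu
    have hT0 : Tendsto (fun n => T (u (φ n))) atTop (𝓝 0) := by
      rw [tendsto_zero_iff_norm_tendsto_zero]
      apply squeeze_zero (fun n => norm_nonneg _) (fun n => (huT (φ n)).le)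
      have h1 : Tendsto (fun n : ℕ => 1 / ((n : ℝ) + 1)) atTop (𝓝 0) :=
        tendsto_one_div_add_atTop_nhds_zero_nat
      apply h1.comp hφ.tendsto_atTop |>.congr
      intro n; simp
    have hul : Tendsto (fun n => u (φ n)) atTop (𝓝 (-y)) := by
      have : (fun n => u (φ n)) = fun n => T (u (φ n)) - C (u (φ n)) := by
        funext n
        rw [hT]
        abel
      rw [this]
      simpa using hT0.sub hyl
    have hyM : -y ∈ M := by
      have : IsSeqClosed (M : Set E) := hMc.isSeqClosed
      exact this (fun n => huM (φ n)) hul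
    have hyN : -y ∈ N := by
      have hTy : T (-y) = 0 := by
        have : Tendsto (fun n => T (u (φ n))) atTop (𝓝 (T (-y))) :=
          (T.continuous.tendsto _).comp hul
        exact tendsto_nhds_unique this hT0
      exact hTy
    have : (-y : E) = 0 := by
      have := hcompl.inf_eq_bot
      have hmem : -y ∈ N ⊓ M := ⟨hyN, hyM⟩
      rw [this] at hmem
      exact hmem
    have hnorm1 : ‖(-y : E)‖ = 1 := by
      have : Tendsto (fun n => ‖u (φ n)‖) atTop (𝓝 ‖(-y : E)‖) := hul.norm
      have h1 : Tendsto (fun _ : ℕ => (1 : ℝ)) atTop (𝓝 ‖(-y : E)‖) := by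
        apply this.congr
        intro n; rw [hunorm]
      exact tendsto_nhds_unique h1 tendsto_const_nhds
    rw [this] at hnorm1
    simp at hnorm1
  obtain ⟨c, hc, hcb⟩ := hbb
  set S : M →L[ℂ] E := T.comp M.subtypeL with hS
  have hanti : AntilipschitzWith ⟨c, hc.le⟩⁻¹ ⇑S := by
    apply S.antilipschitz_of_bound
    intro x
    have := hcb x x.2
    have hxle : ‖(x : E)‖ ≤ c⁻¹ * ‖S x‖ := by
      rw [le_inv_mul_iff₀ hc]
      simpa [hS] using this
    exact hxle
  haveI : CompleteSpace M := hMc.completeSpace_coe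
  have hclosed : IsClosed (Set.range ⇑S) := hanti.isClosed_range S.uniformContinuous
  have hre : ((LinearMap.range (T : E →ₗ[ℂ] E) : Submodule ℂ E) : Set E) = Set.range ⇑S := by
    ext x
    constructor
    · rintro ⟨w, rfl⟩
      have hw : w ∈ N ⊔ M := by
        rw [hcompl.sup_eq_top]; trivial
      obtain ⟨a, ha, b, hb, rfl⟩ := Submodule.mem_sup.1 hw
      refine ⟨⟨b, hb⟩, ?_⟩
      have ha0 : T a = 0 := ha
      simp [hS, ha0]
    · rintro ⟨m, rfl⟩
      exact ⟨m, rfl⟩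
  rw [hre]
  exact hclosed

lemma auxCodim10 [CompleteSpace E] {C : E →L[ℂ] E} (hC : IsCompactOperator ⇑C)
    (T : E →L[ℂ] E) (hT : ∀ x, T x = x + C x)
    (hR : IsClosed ((LinearMap.range (T : E →ₗ[ℂ] E) : Submodule ℂ E) : Set E)) :
    FiniteDimensional ℂ (E ⧸ LinearMap.range (T : E →ₗ[ℂ] E)) := by
  classical
  by_contra hinf
  set R : Submodule ℂ E := LinearMap.range (T : E →ₗ[ℂ] E) with hRdef
  have hmapbot : R.map R.mkQ = ⊥ := by
    apply le_bot_iff.1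
    rw [Submodule.map_le_iff_le_comap, Submodule.comap_bot, Submodule.ker_mkQ]
  have hmapeq : ∀ s : Finset E,
      (R ⊔ Submodule.span ℂ (s : Set E)).map R.mkQ = Submodule.span ℂ (R.mkQ '' s) := by
    intro s
    rw [Submodule.map_sup, Submodule.map_span, hmapbot, bot_sup_eq]
  have hWclosed : ∀ s : Finset E,
      IsClosed ((R ⊔ Submodule.span ℂ (s : Set E) : Submodule ℂ E) : Set E) := by
    intro s
    apply auxClosedSup10 hR le_sup_left
    rw [hmapeq s]
    exact FiniteDimensional.span_of_finite ℂ (s.finite_toSet.image _)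
  have hWtop : ∀ s : Finset E, (R ⊔ Submodule.span ℂ (s : Set E)) ≠ ⊤ := by
    intro s htop
    apply hinf
    have h2 := congrArg (Submodule.map R.mkQ) htop
    rw [hmapeq s, Submodule.map_top, Submodule.range_mkQ] at h2
    haveI := FiniteDimensional.span_of_finite ℂ (s.finite_toSet.image R.mkQ)
    rw [h2] at this
    exact Submodule.topEquiv.finiteDimensional
  have hriesz : ∀ s : Finset E, ∃ x : E, ‖x‖ = 1 ∧
      ∀ y ∈ (R ⊔ Submodule.span ℂ (s : Set E)), (1 : ℝ) / 2 ≤ ‖x - y‖ := by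
    intro s
    set W := R ⊔ Submodule.span ℂ (s : Set E) with hW
    have hex : ∃ x, x ∉ W := by
      by_contra hno
      push_neg at hno
      exact hWtop s (Submodule.eq_top_iff'.2 hno)
    obtain ⟨x₀, hx₀, hx⟩ := riesz_lemma (hWclosed s) hex (by norm_num : (1 : ℝ) / 2 < 1)
    have hx0 : x₀ ≠ 0 := fun h => hx₀ (h ▸ W.zero_mem)
    have hnx : ‖x₀‖ ≠ 0 := norm_ne_zero_iff.2 hx0
    refine ⟨(‖x₀‖⁻¹ : ℂ) • x₀, by simp [norm_smul, inv_mul_cancel₀ hnx], fun y hy => ?_⟩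
    have hy' := hx ((‖x₀‖ : ℂ) • y) (W.smul_mem _ hy)
    have heq : (‖x₀‖⁻¹ : ℂ) • x₀ - y = (‖x₀‖⁻¹ : ℂ) • (x₀ - (‖x₀‖ : ℂ) • y) := by
      rw [smul_sub, smul_smul]
      congr 2
      rw [← Complex.ofReal_inv, ← Complex.ofReal_mul, inv_mul_cancel₀ hnx]
      simp
    rw [heq, norm_smul]
    have h1 : ‖((‖x₀‖ : ℂ))⁻¹‖ = ‖x₀‖⁻¹ := by
      rw [norm_inv, Complex.norm_real]
      simp
    rw [h1]
    calc (1 : ℝ) / 2 = ‖x₀‖⁻¹ * (1 / 2 * ‖x₀‖) := by field_simp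
      _ ≤ ‖x₀‖⁻¹ * ‖x₀ - (‖x₀‖ : ℂ) • y‖ := by
          apply mul_le_mul_of_nonneg_left hy' (by positivity)
  choose F hF1 hF2 using hriesz
  set Sq : ℕ → Finset E := fun n => Nat.rec ∅ (fun _ s => insert (F s) s) n with hSq
  set u : ℕ → E := fun n => F (Sq n) with hu
  have hSsucc : ∀ n, Sq (n + 1) = insert (u n) (Sq n) := fun n => rfl
  have hmono : Monotone Sq := monotone_nat_of_le_succ fun n => by
    rw [hSsucc]; exact Finset.subset_insert _ _
  have humem : ∀ m n, m < n → u m ∈ Sq n := fun m n h =>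
    hmono (Nat.succ_le_of_lt h) ((hSsucc m) ▸ Finset.mem_insert_self _ _)
  have hCe : ∀ x, C x = T x - x := fun x => by rw [hT]; abel
  have hsep : ∀ m n, m < n → (1 : ℝ) / 2 ≤ ‖C (u n) - C (u m)‖ := by
    intro m n h
    have hmem : T (u n) - T (u m) + u m ∈ R ⊔ Submodule.span ℂ ((Sq n : Set E)) := by
      apply Submodule.add_mem_sup
      · exact sub_mem (LinearMap.mem_range_self _ _) (LinearMap.mem_range_self _ _)
      · exact Submodule.subset_span (by exact_mod_cast humem m n h)
    have h2 := hF2 (Sq n) _ hmem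
    have heq : C (u n) - C (u m) = -(u n - (T (u n) - T (u m) + u m)) := by
      rw [hCe (u n), hCe (u m)]
      abel
    rw [heq, norm_neg]
    exact h2
  obtain ⟨K, hK, hKsub⟩ :=
    IsCompactOperator.image_closedBall_subset_compact (f := (C : E →ₗ[ℂ] E)) hC 1
  have hCu : ∀ n, C (u n) ∈ K := fun n => hKsub ⟨u n, mem_closedBall_zero_iff.2 (hF1 (Sq n)).le, rfl⟩
  obtain ⟨y, -, φ, hφ, hyl⟩ := hK.tendsto_subseq hCu
  have hcauchy : CauchySeq fun n => C (u (φ n)) := hyl.cauchySeq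
  rw [Metric.cauchySeq_iff] at hcauchy
  obtain ⟨Nn, hNn⟩ := hcauchy (1 / 2) (by norm_num)
  have h1 := hNn (Nn + 1) (by omega) Nn (by omega)
  have h2 := hsep (φ Nn) (φ (Nn + 1)) (hφ (by omega))
  rw [dist_eq_norm] at h1
  linarith

end FredholmAux

/-- If `P`, `Q` are continuous projections in a Banach space `E` with `P − Q` compact,
then `(im P, ker Q)` is a Fredholm pair: `im P + ker Q` is closed, `im P ∩ ker Q` is
finite dimensional, and `im P + ker Q` has finite codimension. -/
theorem stmt10 {E : Type*} [NormedAddCommGroup E] [NormedSpace ℂ E] [CompleteSpace E]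
    (P Q : E →L[ℂ] E) (hP : ∀ x, P (P x) = P x) (hQ : ∀ x, Q (Q x) = Q x)
    (hPQ : IsCompactOperator ⇑(P - Q)) :
    IsClosed ((LinearMap.range (P : E →ₗ[ℂ] E) ⊔ LinearMap.ker (Q : E →ₗ[ℂ] E) : Submodule ℂ E) : Set E) ∧
      FiniteDimensional ℂ ↥(LinearMap.range (P : E →ₗ[ℂ] E) ⊓ LinearMap.ker (Q : E →ₗ[ℂ] E)) ∧
      FiniteDimensional ℂ (E ⧸ (LinearMap.range (P : E →ₗ[ℂ] E) ⊔ LinearMap.ker (Q : E →ₗ[ℂ] E))) := by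
  classical
  have hrangeP : (LinearMap.range (P : E →ₗ[ℂ] E) : Submodule ℂ E)
      = LinearMap.ker ((ContinuousLinearMap.id ℂ E - P : E →L[ℂ] E) : E →ₗ[ℂ] E) := by
    ext x
    constructor
    · rintro ⟨w, rfl⟩
      have : (ContinuousLinearMap.id ℂ E - P) (P w) = 0 := by
        simp [ContinuousLinearMap.sub_apply, hP w]
      exact this
    · intro hx
      have hx' : x - P x = 0 := hx
      exact ⟨x, by rw [← sub_eq_zero]; rw [← neg_eq_zero]; simpa using hx'⟩
  have hPclosed : IsClosed ((LinearMap.range (P : E →ₗ[ℂ] E) : Submodule ℂ E) : Set E) := by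
    rw [hrangeP]
    exact ContinuousLinearMap.isClosed_ker _
  have hQker : IsClosed ((LinearMap.ker (Q : E →ₗ[ℂ] E) : Submodule ℂ E) : Set E) :=
    ContinuousLinearMap.isClosed_ker Q
  have hPmem : ∀ x, x ∈ LinearMap.range (P : E →ₗ[ℂ] E) → P x = x := by
    rintro _ ⟨w, rfl⟩
    exact hP w
  -- Part 2 : finite dimensionality of the intersection
  have part2 : FiniteDimensional ℂ ↥(LinearMap.range (P : E →ₗ[ℂ] E) ⊓ LinearMap.ker (Q : E →ₗ[ℂ] E)) := by
    apply auxFD10 hPQ _ (by rw [Submodule.coe_inf]; exact hPclosed.inter hQker)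
    rintro x ⟨hx1, hx2⟩
    have hQx : Q x = 0 := hx2
    simp [ContinuousLinearMap.sub_apply, hPmem x hx1, hQx]
  -- The compact perturbation of the identity
  have hQP : IsCompactOperator ⇑(Q - P) := by
    have h := hPQ.neg
    have he : (-⇑(P - Q)) = ⇑(Q - P) := by
      funext x
      simp
    rwa [he] at h
  set C : E →L[ℂ] E := P.comp (Q - P) + Q.comp (P - Q) with hCdef
  have hC : IsCompactOperator ⇑C := by
    have h1 : IsCompactOperator (⇑P ∘ ⇑(Q - P)) := hQP.clm_comp P
    have h2 : IsCompactOperator (⇑Q ∘ ⇑(P - Q)) := hPQ.clm_comp Q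
    have h3 := h1.add h2
    have he : (⇑P ∘ ⇑(Q - P)) + (⇑Q ∘ ⇑(P - Q)) = ⇑C := by
      funext x
      simp [hCdef]
    rwa [he] at h3
  set T : E →L[ℂ] E := ContinuousLinearMap.id ℂ E + C with hTdef
  have hTx : ∀ x, T x = x + C x := fun x => rfl
  have hRclosed := auxRangeClosed10 hC T hTx
  have hRcodim := auxCodim10 hC T hTx hRclosed
  have hle : LinearMap.range (T : E →ₗ[ℂ] E) ≤ LinearMap.range (P : E →ₗ[ℂ] E) ⊔ LinearMap.ker (Q : E →ₗ[ℂ] E) := by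
    rintro _ ⟨x, rfl⟩
    have hTval : T x = P (Q x) + ((x - P x) - Q (x - P x)) := by
      have : T x = x + (P (Q x) - P (P x) + (Q (P x) - Q (Q x))) := by
        simp [hTdef, hCdef, ContinuousLinearMap.add_apply, ContinuousLinearMap.comp_apply,
          ContinuousLinearMap.sub_apply, map_sub]
      rw [this, hP x, hQ x, map_sub]
      abel
    rw [ContinuousLinearMap.coe_coe, hTval]
    apply Submodule.add_mem_sup
    · exact LinearMap.mem_range_self _ _
    · show Q ((x - P x) - Q (x - P x)) = 0
      rw [map_sub, hQ (x - P x), sub_self]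
  haveI := hRcodim
  have part3 : FiniteDimensional ℂ (E ⧸ (LinearMap.range (P : E →ₗ[ℂ] E) ⊔ LinearMap.ker (Q : E →ₗ[ℂ] E))) := by
    have hcom : LinearMap.range (T : E →ₗ[ℂ] E) ≤
        Submodule.comap (LinearMap.id : E →ₗ[ℂ] E) (LinearMap.range (P : E →ₗ[ℂ] E) ⊔ LinearMap.ker (Q : E →ₗ[ℂ] E)) := by
      simpa using hle
    have hsur : Function.Surjective ⇑(Submodule.mapQ (LinearMap.range (T : E →ₗ[ℂ] E))
        (LinearMap.range (P : E →ₗ[ℂ] E) ⊔ LinearMap.ker (Q : E →ₗ[ℂ] E)) LinearMap.id hcom) := by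
      intro z
      obtain ⟨x, rfl⟩ := Submodule.Quotient.mk_surjective _ z
      exact ⟨Submodule.Quotient.mk x, by simp [Submodule.mapQ_apply]⟩
    exact Module.Finite.of_surjective _ hsur
  have part1 : IsClosed ((LinearMap.range (P : E →ₗ[ℂ] E) ⊔ LinearMap.ker (Q : E →ₗ[ℂ] E) : Submodule ℂ E) : Set E) := by
    apply auxClosedSup10 hRclosed hle
    exact FiniteDimensional.finiteDimensional_submodule _
  exact ⟨part1, part2, part3⟩
end

section
/- Let H be a separable Hilbert space with orthonormal basis (eₙ) of eigenvectors of a self-adjoint operator A, A eₙ = aₙ eₙ. Let σ : ℝ≥0 → H be Lipschitz with compact support and values σ(t) = Σ σₙ(t)eₙ. Then there is a universal constant C such that ‖σ(t)−σ(s)‖²_{H^{1/2}} ≤ C(‖σ‖²_{L²([s,t],H)} + ‖σ'‖²_{L²([s,t],H)} + ‖Aσ‖²_{L²([s,t],H)}) for all 0 ≤ s ≤ t. -/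
open MeasureTheory Set
open scoped ENNReal

lemma ofReal_norm_eq_coe_nnnorm {E : Type*} [SeminormedAddGroup E] (a : E) :
    ENNReal.ofReal ‖a‖ = (‖a‖₊ : ℝ≥0∞) := ENNReal.ofReal_eq_coe_nnreal _

lemma csENN {I : Set ℝ} (g : ℝ → ℝ≥0∞) (hg : AEMeasurable g (volume.restrict I)) :
    (∫⁻ x in I, g x) ^ 2 ≤ volume I * ∫⁻ x in I, (g x) ^ 2 := by
  have hpq : Real.HolderConjugate 2 2 := ⟨by norm_num, by norm_num, by norm_num⟩
  have h := ENNReal.lintegral_mul_le_Lp_mul_Lq (volume.restrict I) hpq hg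
    (aemeasurable_const : AEMeasurable (fun _ => (1:ℝ≥0∞)) _)
  simp only [Pi.mul_apply, mul_one, ENNReal.one_rpow, lintegral_const,
    Measure.restrict_apply MeasurableSet.univ, univ_inter, one_mul] at h
  calc (∫⁻ x in I, g x) ^ 2
      ≤ ((∫⁻ x in I, g x ^ (2:ℝ)) ^ (1/(2:ℝ)) * (volume I) ^ (1/(2:ℝ))) ^ 2 :=
        pow_le_pow_left' h 2
    _ = (∫⁻ x in I, g x ^ (2:ℝ)) * volume I := by
        rw [mul_pow, ← ENNReal.rpow_natCast (_ ^ (1/(2:ℝ))), ← ENNReal.rpow_natCast ((volume I) ^ (1/(2:ℝ))),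
          ← ENNReal.rpow_mul, ← ENNReal.rpow_mul]
        norm_num
    _ = volume I * ∫⁻ x in I, g x ^ 2 := by
        rw [mul_comm]
        congr 1
        refine lintegral_congr fun x => ?_
        rw [← ENNReal.rpow_natCast (g x) 2]
        norm_num

lemma seg (f f' : ℝ → ℂ) {s t u v : ℝ} (huv : u ≤ v) (hsub : Icc u v ⊆ Icc s t)
    (hd : ∀ x ∈ Icc s t, HasDerivAt f (f' x) x)
    (hi : IntegrableOn f' (Icc s t))
    (haem : AEMeasurable f' (volume.restrict (Icc s t))) :
    (‖f v - f u‖₊ : ℝ≥0∞) ^ 2 ≤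
      ENNReal.ofReal (v - u) * ∫⁻ x in Icc s t, (‖f' x‖₊ : ℝ≥0∞) ^ 2 := by
  have hiuv : IntegrableOn f' (Ioc u v) :=
    hi.mono_set ((Ioc_subset_Icc_self).trans hsub)
  have hftc : ∫ x in u..v, f' x = f v - f u := by
    refine intervalIntegral.integral_eq_sub_of_hasDerivAt (fun x hx => ?_) ?_
    · exact hd x (hsub (by rwa [uIcc_of_le huv] at hx))
    · exact (hi.mono_set (by rw [uIcc_of_le huv]; exact hsub)).intervalIntegrable
  have h1 : ‖f v - f u‖ ≤ ∫ x in Ioc u v, ‖f' x‖ := by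
    rw [← hftc, ← intervalIntegral.integral_of_le huv]
    exact intervalIntegral.norm_integral_le_integral_norm huv
  have h2 : (‖f v - f u‖₊ : ℝ≥0∞) ≤ ∫⁻ x in Ioc u v, (‖f' x‖₊ : ℝ≥0∞) := by
    rw [← ofReal_norm_eq_coe_nnnorm]
    calc ENNReal.ofReal ‖f v - f u‖ ≤ ENNReal.ofReal (∫ x in Ioc u v, ‖f' x‖) :=
          ENNReal.ofReal_le_ofReal h1
      _ = ∫⁻ x in Ioc u v, ENNReal.ofReal ‖f' x‖ :=
          ofReal_integral_eq_lintegral_ofReal hiuv.norm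
            (Filter.Eventually.of_forall fun x => norm_nonneg _)
      _ = ∫⁻ x in Ioc u v, (‖f' x‖₊ : ℝ≥0∞) := by
          exact lintegral_congr fun x => ofReal_norm_eq_coe_nnnorm (f' x)
  have haem' : AEMeasurable (fun x => (‖f' x‖₊ : ℝ≥0∞)) (volume.restrict (Ioc u v)) := by
    refine AEMeasurable.coe_nnreal_ennreal (AEMeasurable.nnnorm ?_)
    exact haem.mono_measure (Measure.restrict_mono ((Ioc_subset_Icc_self).trans hsub) le_rfl)
  calc (‖f v - f u‖₊ : ℝ≥0∞) ^ 2 ≤ (∫⁻ x in Ioc u v, (‖f' x‖₊ : ℝ≥0∞)) ^ 2 :=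
        pow_le_pow_left' h2 2
    _ ≤ volume (Ioc u v) * ∫⁻ x in Ioc u v, (‖f' x‖₊ : ℝ≥0∞) ^ 2 := csENN _ haem'
    _ ≤ ENNReal.ofReal (v - u) * ∫⁻ x in Icc s t, (‖f' x‖₊ : ℝ≥0∞) ^ 2 := by
        gcongr
        · rw [Real.volume_Ioc]
        · exact (Ioc_subset_Icc_self).trans hsub

lemma core {f f' : ℝ → ℂ} {s t : ℝ} (hst : s ≤ t)
    (hd : ∀ u ∈ Icc s t, HasDerivAt f (f' u) u)
    {b : ℝ≥0∞} (hb0 : b ≠ 0) (hbt : b ≠ ⊤) :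
    b * (‖f t - f s‖₊ : ℝ≥0∞) ^ 2 ≤
      8 * (∫⁻ u in Icc s t, (‖f' u‖₊ : ℝ≥0∞) ^ 2) +
      8 * b ^ 2 * ∫⁻ u in Icc s t, (‖f u‖₊ : ℝ≥0∞) ^ 2 := by
  set B2 := ∫⁻ u in Icc s t, (‖f' u‖₊ : ℝ≥0∞) ^ 2 with hB2def
  set A2 := ∫⁻ u in Icc s t, (‖f u‖₊ : ℝ≥0∞) ^ 2 with hA2def
  by_cases hB2 : B2 = ⊤
  · calc b * (‖f t - f s‖₊ : ℝ≥0∞) ^ 2 ≤ ⊤ := le_top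
      _ ≤ _ := by
        rw [hB2, ENNReal.mul_top (by norm_num : (8:ℝ≥0∞) ≠ 0), top_add]
  have hcont : ContinuousOn f (Icc s t) := fun u hu =>
    (hd u hu).continuousAt.continuousWithinAt
  have hae : f' =ᵐ[volume.restrict (Icc s t)] deriv f := by
    rw [← restrict_Ioo_eq_restrict_Icc]
    refine (ae_restrict_iff' measurableSet_Ioo).2 (Filter.Eventually.of_forall fun u hu => ?_)
    exact ((hd u (Ioo_subset_Icc_self hu)).deriv).symm
  have haem : AEMeasurable f' (volume.restrict (Icc s t)) :=
    (measurable_deriv f).aemeasurable.congr hae.symm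
  have hi : IntegrableOn f' (Icc s t) := by
    refine ⟨haem.aestronglyMeasurable, ?_⟩
    have hpt : ∀ u : ℝ, (‖f' u‖₊ : ℝ≥0∞) ≤ 1 + (‖f' u‖₊ : ℝ≥0∞) ^ 2 := by
      intro u
      rcases le_total ((‖f' u‖₊ : ℝ≥0∞)) 1 with h | h
      · exact le_add_right h
      · refine le_add_left ?_
        calc (‖f' u‖₊ : ℝ≥0∞) = ‖f' u‖₊ * 1 := (mul_one _).symm
          _ ≤ ‖f' u‖₊ * ‖f' u‖₊ := mul_le_mul_right h _
          _ = (‖f' u‖₊ : ℝ≥0∞) ^ 2 := (sq _).symm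
    refine lt_of_le_of_lt (lintegral_mono hpt) ?_
    rw [lintegral_add_left measurable_const]
    simp only [lintegral_const, Measure.restrict_apply MeasurableSet.univ, univ_inter, one_mul]
    exact ENNReal.add_lt_top.2 ⟨by simp [Real.volume_Icc], lt_top_iff_ne_top.2 hB2⟩
  set r := (b⁻¹).toReal with hrdef
  have hbinvt : b⁻¹ ≠ ⊤ := by simp [hb0]
  have hbinv : ENNReal.ofReal r = b⁻¹ := ENNReal.ofReal_toReal hbinvt
  have hr0 : 0 ≤ r := ENNReal.toReal_nonneg
  by_cases hcase : t - s ≤ r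
  · have h := seg f f' hst subset_rfl hd hi haem
    calc b * (‖f t - f s‖₊ : ℝ≥0∞) ^ 2
        ≤ b * (ENNReal.ofReal (t - s) * B2) := mul_le_mul_right h b
      _ ≤ b * (b⁻¹ * B2) := by
          gcongr
          rw [← hbinv]; exact ENNReal.ofReal_le_ofReal hcase
      _ = B2 := by rw [← mul_assoc, ENNReal.mul_inv_cancel hb0 hbt, one_mul]
      _ ≤ _ := le_add_right (le_mul_of_one_le_left' (by norm_num))
  · push_neg at hcase
    have hrs : s ≤ t - r := by linarith
    have hsr : s + r ≤ t := by linarith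
    have hsub1 : Icc (t - r) t ⊆ Icc s t := Icc_subset_Icc hrs le_rfl
    have hsub2 : Icc s (s + r) ⊆ Icc s t := Icc_subset_Icc le_rfl hsr
    obtain ⟨u₀, hu₀mem, hu₀min⟩ := (isCompact_Icc : IsCompact (Icc (t - r) t)).exists_isMinOn
      (nonempty_Icc.2 (by linarith)) ((hcont.mono hsub1).norm)
    obtain ⟨v₀, hv₀mem, hv₀min⟩ := (isCompact_Icc : IsCompact (Icc s (s + r))).exists_isMinOn
      (nonempty_Icc.2 (by linarith)) ((hcont.mono hsub2).norm)
    -- FTC bounds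
    have hb1 : (‖f t - f u₀‖₊ : ℝ≥0∞) ^ 2 ≤ b⁻¹ * B2 := by
      refine le_trans (seg f f' hu₀mem.2 (Icc_subset_Icc (hrs.trans hu₀mem.1) le_rfl) hd hi haem) ?_
      gcongr
      rw [← hbinv]
      exact ENNReal.ofReal_le_ofReal (by linarith [hu₀mem.1])
    have hb4 : (‖f v₀ - f s‖₊ : ℝ≥0∞) ^ 2 ≤ b⁻¹ * B2 := by
      refine le_trans (seg f f' hv₀mem.1 (Icc_subset_Icc le_rfl (hv₀mem.2.trans hsr)) hd hi haem) ?_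
      gcongr
      rw [← hbinv]
      exact ENNReal.ofReal_le_ofReal (by linarith [hv₀mem.2])
    -- averaging bounds
    have hminbound : ∀ (I : Set ℝ) (hIsub : I ⊆ Icc s t) (w : ℝ) (_ : w ∈ I)
        (hmin : IsMinOn (fun u => ‖f u‖) I w) (hIvol : volume I = ENNReal.ofReal r)
        (hImeas : MeasurableSet I),
        (‖f w‖₊ : ℝ≥0∞) ^ 2 ≤ b * A2 := by
      intro I hIsub w hwI hmin hIvol hImeas
      have haemI : AEMeasurable (fun u => (‖f u‖₊ : ℝ≥0∞) ^ 2) (volume.restrict I) :=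
        ((((hcont.mono hIsub).aemeasurable hImeas).nnnorm).coe_nnreal_ennreal).pow_const 2
      have hkey : (‖f w‖₊ : ℝ≥0∞) ^ 2 * b⁻¹ ≤ A2 := by
        calc (‖f w‖₊ : ℝ≥0∞) ^ 2 * b⁻¹
            = ∫⁻ _ in I, (‖f w‖₊ : ℝ≥0∞) ^ 2 := by
              rw [lintegral_const, Measure.restrict_apply MeasurableSet.univ, univ_inter,
                hIvol, hbinv]
          _ ≤ ∫⁻ u in I, (‖f u‖₊ : ℝ≥0∞) ^ 2 := by
              refine setLIntegral_mono_ae haemI (Filter.Eventually.of_forall fun u hu => ?_)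
              have : ‖f w‖ ≤ ‖f u‖ := hmin hu
              have hnn : ‖f w‖₊ ≤ ‖f u‖₊ := this
              exact pow_le_pow_left' (ENNReal.coe_le_coe.2 hnn) 2
          _ ≤ A2 := lintegral_mono_set hIsub
      calc (‖f w‖₊ : ℝ≥0∞) ^ 2 = (‖f w‖₊ : ℝ≥0∞) ^ 2 * b⁻¹ * b := by
            rw [mul_assoc, ENNReal.inv_mul_cancel hb0 hbt, mul_one]
        _ ≤ A2 * b := mul_le_mul_left hkey b
        _ = b * A2 := mul_comm _ _
    have hb2 : (‖f u₀‖₊ : ℝ≥0∞) ^ 2 ≤ b * A2 :=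
      hminbound _ hsub1 u₀ hu₀mem hu₀min (by rw [Real.volume_Icc]; ring_nf) measurableSet_Icc
    have hb3 : (‖f v₀‖₊ : ℝ≥0∞) ^ 2 ≤ b * A2 :=
      hminbound _ hsub2 v₀ hv₀mem hv₀min (by rw [Real.volume_Icc]; ring_nf) measurableSet_Icc
    -- triangle + squares
    have htri : ‖f t - f s‖ ≤ ‖f t - f u₀‖ + ‖f u₀‖ + ‖f v₀‖ + ‖f v₀ - f s‖ := by
      have hsplit : f t - f s = ((f t - f u₀) + f u₀) + ((f v₀ - f s) - f v₀) := by ring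
      have h1 := norm_add_le ((f t - f u₀) + f u₀) ((f v₀ - f s) - f v₀)
      have h2 := norm_add_le (f t - f u₀) (f u₀)
      have h3 := norm_sub_le (f v₀ - f s) (f v₀)
      rw [hsplit]
      linarith
    have hsq : ‖f t - f s‖ ^ 2 ≤
        4 * (‖f t - f u₀‖ ^ 2 + ‖f u₀‖ ^ 2 + ‖f v₀‖ ^ 2 + ‖f v₀ - f s‖ ^ 2) := by
      nlinarith [norm_nonneg (f t - f s), norm_nonneg (f t - f u₀), norm_nonneg (f u₀),
        norm_nonneg (f v₀), norm_nonneg (f v₀ - f s), htri,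
        sq_nonneg (‖f t - f u₀‖ - ‖f u₀‖), sq_nonneg (‖f t - f u₀‖ - ‖f v₀‖),
        sq_nonneg (‖f t - f u₀‖ - ‖f v₀ - f s‖), sq_nonneg (‖f u₀‖ - ‖f v₀‖),
        sq_nonneg (‖f u₀‖ - ‖f v₀ - f s‖), sq_nonneg (‖f v₀‖ - ‖f v₀ - f s‖)]
    have hEsq : (‖f t - f s‖₊ : ℝ≥0∞) ^ 2 ≤
        4 * ((‖f t - f u₀‖₊ : ℝ≥0∞) ^ 2 + (‖f u₀‖₊ : ℝ≥0∞) ^ 2 + (‖f v₀‖₊ : ℝ≥0∞) ^ 2 +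
          (‖f v₀ - f s‖₊ : ℝ≥0∞) ^ 2) := by
      calc (‖f t - f s‖₊ : ℝ≥0∞) ^ 2 = ENNReal.ofReal (‖f t - f s‖ ^ 2) := by
            rw [ENNReal.ofReal_pow (norm_nonneg _), ofReal_norm_eq_coe_nnnorm]
        _ ≤ ENNReal.ofReal (4 * (‖f t - f u₀‖ ^ 2 + ‖f u₀‖ ^ 2 + ‖f v₀‖ ^ 2 +
              ‖f v₀ - f s‖ ^ 2)) := ENNReal.ofReal_le_ofReal hsq
        _ = _ := by
            rw [ENNReal.ofReal_mul (by norm_num),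
              ENNReal.ofReal_add (by positivity) (by positivity),
              ENNReal.ofReal_add (by positivity) (by positivity),
              ENNReal.ofReal_add (by positivity) (by positivity),
              ENNReal.ofReal_pow (norm_nonneg _), ENNReal.ofReal_pow (norm_nonneg _),
              ENNReal.ofReal_pow (norm_nonneg _), ENNReal.ofReal_pow (norm_nonneg _),
              ofReal_norm_eq_coe_nnnorm, ofReal_norm_eq_coe_nnnorm,
              ofReal_norm_eq_coe_nnnorm, ofReal_norm_eq_coe_nnnorm]
            norm_num
    calc b * (‖f t - f s‖₊ : ℝ≥0∞) ^ 2
        ≤ b * (4 * ((b⁻¹ * B2) + (b * A2) + (b * A2) + (b⁻¹ * B2))) := by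
          refine mul_le_mul_right (hEsq.trans ?_) b
          gcongr
      _ = 8 * (b * (b⁻¹ * B2)) + 8 * b ^ 2 * A2 := by ring
      _ = 8 * B2 + 8 * b ^ 2 * A2 := by
          rw [← mul_assoc b, ENNReal.mul_inv_cancel hb0 hbt, one_mul]

lemma aemeasf {f f' : ℝ → ℂ} {s t : ℝ}
    (hd : ∀ u ∈ Icc s t, HasDerivAt f (f' u) u) :
    AEMeasurable (fun u => (‖f u‖₊ : ℝ≥0∞) ^ 2) (volume.restrict (Icc s t)) := by
  have hcont : ContinuousOn f (Icc s t) := fun u hu =>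
    (hd u hu).continuousAt.continuousWithinAt
  exact ((hcont.aemeasurable measurableSet_Icc).nnnorm.coe_nnreal_ennreal).pow_const 2

lemma aemeasf' {f f' : ℝ → ℂ} {s t : ℝ}
    (hd : ∀ u ∈ Icc s t, HasDerivAt f (f' u) u) :
    AEMeasurable (fun u => (‖f' u‖₊ : ℝ≥0∞) ^ 2) (volume.restrict (Icc s t)) := by
  have hae : f' =ᵐ[volume.restrict (Icc s t)] deriv f := by
    rw [← restrict_Ioo_eq_restrict_Icc]
    refine (ae_restrict_iff' measurableSet_Ioo).2 (Filter.Eventually.of_forall fun u hu => ?_)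
    exact ((hd u (Ioo_subset_Icc_self hu)).deriv).symm
  have haem : AEMeasurable f' (volume.restrict (Icc s t)) :=
    (measurable_deriv f).aemeasurable.congr hae.symm
  exact (haem.nnnorm.coe_nnreal_ennreal).pow_const 2

lemma comp {f f' : ℝ → ℂ} {s t : ℝ} (hst : s ≤ t)
    (hd : ∀ u ∈ Icc s t, HasDerivAt f (f' u) u) (a : ℝ) :
    ENNReal.ofReal (Real.sqrt (1 + a ^ 2)) * (‖f t - f s‖₊ : ℝ≥0∞) ^ 2 ≤
      16 * ((∫⁻ u in Icc s t, (‖f u‖₊ : ℝ≥0∞) ^ 2) +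
        (∫⁻ u in Icc s t, (‖f' u‖₊ : ℝ≥0∞) ^ 2) +
        ENNReal.ofReal (a ^ 2) * ∫⁻ u in Icc s t, (‖f u‖₊ : ℝ≥0∞) ^ 2) := by
  set B := ∫⁻ u in Icc s t, (‖f' u‖₊ : ℝ≥0∞) ^ 2 with hB
  set A := ∫⁻ u in Icc s t, (‖f u‖₊ : ℝ≥0∞) ^ 2 with hA
  set z := ENNReal.ofReal (a ^ 2) with hz
  have hsqrt : Real.sqrt (1 + a ^ 2) ≤ 1 + |a| := by
    rw [show (1 + a ^ 2 : ℝ) = (1 + |a|) ^ 2 - 2 * |a| by rw [add_sq]; rw [sq_abs]; ring]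
    refine le_trans (Real.sqrt_le_sqrt (by nlinarith [abs_nonneg a] : (1 + |a|) ^ 2 - 2 * |a| ≤ (1 + |a|) ^ 2)) ?_
    rw [Real.sqrt_sq (by positivity)]
  have hof : ENNReal.ofReal (Real.sqrt (1 + a ^ 2)) ≤ 1 + ENNReal.ofReal |a| := by
    refine le_trans (ENNReal.ofReal_le_ofReal hsqrt) ?_
    rw [ENNReal.ofReal_add zero_le_one (abs_nonneg a), ENNReal.ofReal_one]
  have h1 : 1 * (‖f t - f s‖₊ : ℝ≥0∞) ^ 2 ≤ 8 * B + 8 * 1 ^ 2 * A :=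
    core hst hd one_ne_zero ENNReal.one_ne_top
  have h2 : ENNReal.ofReal |a| * (‖f t - f s‖₊ : ℝ≥0∞) ^ 2 ≤
      8 * B + 8 * (ENNReal.ofReal |a|) ^ 2 * A := by
    by_cases ha : a = 0
    · simp [ha]
    · exact core hst hd (by simpa using abs_pos.2 ha) ENNReal.ofReal_ne_top
  have habs2 : (ENNReal.ofReal |a|) ^ 2 = z := by
    rw [hz, ← ENNReal.ofReal_pow (abs_nonneg a), sq_abs]
  calc ENNReal.ofReal (Real.sqrt (1 + a ^ 2)) * (‖f t - f s‖₊ : ℝ≥0∞) ^ 2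
      ≤ (1 + ENNReal.ofReal |a|) * (‖f t - f s‖₊ : ℝ≥0∞) ^ 2 := mul_le_mul_left hof _
    _ = 1 * (‖f t - f s‖₊ : ℝ≥0∞) ^ 2 + ENNReal.ofReal |a| * (‖f t - f s‖₊ : ℝ≥0∞) ^ 2 :=
        add_mul _ _ _
    _ ≤ (8 * B + 8 * 1 ^ 2 * A) + (8 * B + 8 * (ENNReal.ofReal |a|) ^ 2 * A) :=
        add_le_add h1 h2
    _ = 16 * B + 8 * A + 8 * (z * A) := by rw [habs2]; ring
    _ ≤ 16 * B + 16 * A + 16 * (z * A) := by gcongr <;> norm_num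
    _ = 16 * (A + B + z * A) := by ring

/-- `H^{1/2}`-difference estimate, in diagonal form: for a discrete self-adjoint
operator with eigenvalues `a n` and a section with components `σ n` (derivatives
`σ' n`), there is a universal constant `C` with
`‖σ(t)−σ(s)‖²_{H^{1/2}} ≤ C(‖σ‖²_{L²([s,t],H)} + ‖σ'‖²_{L²([s,t],H)} + ‖Aσ‖²_{L²([s,t],H)})`. -/
theorem stmt13 :
    ∃ C : ℝ≥0∞, 0 < C ∧ C < ⊤ ∧
      ∀ (a : ℕ → ℝ) (σ σ' : ℕ → ℝ → ℂ) (s t : ℝ), 0 ≤ s → s ≤ t →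
        (∀ n, ∀ u ∈ Icc s t, HasDerivAt (σ n) (σ' n u) u) →
        (∑' n, ENNReal.ofReal (Real.sqrt (1 + (a n) ^ 2)) *
            (‖σ n t - σ n s‖₊ : ℝ≥0∞) ^ 2) ≤
          C * ((∫⁻ u in Icc s t, ∑' n, (‖σ n u‖₊ : ℝ≥0∞) ^ 2) +
            (∫⁻ u in Icc s t, ∑' n, (‖σ' n u‖₊ : ℝ≥0∞) ^ 2) +
            ∫⁻ u in Icc s t, ∑' n,
              ENNReal.ofReal ((a n) ^ 2) * (‖σ n u‖₊ : ℝ≥0∞) ^ 2) := by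
  refine ⟨16, by norm_num, by norm_num, ?_⟩
  intro a σ σ' s t _ hst hd
  rw [lintegral_tsum (fun n => aemeasf (hd n)),
    lintegral_tsum (fun n => aemeasf' (hd n)),
    lintegral_tsum (fun n => (aemeasf (hd n)).const_mul (ENNReal.ofReal ((a n) ^ 2)))]
  have hthird : ∀ n, (∫⁻ u in Icc s t, ENNReal.ofReal ((a n) ^ 2) * (‖σ n u‖₊ : ℝ≥0∞) ^ 2) =
      ENNReal.ofReal ((a n) ^ 2) * ∫⁻ u in Icc s t, (‖σ n u‖₊ : ℝ≥0∞) ^ 2 := fun n =>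
    lintegral_const_mul' _ _ ENNReal.ofReal_ne_top
  rw [tsum_congr hthird, ← ENNReal.tsum_add, ← ENNReal.tsum_add, ← ENNReal.tsum_mul_left]
  exact ENNReal.tsum_le_tsum fun n => comp hst (hd n) (a n)
end
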